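/- Let Γ = C_n be the directed cycle on [n] (n ≥ 3), with edges i → i±1 modulo n. Let v_1, v_2, …, v_m (m < n) be consecutive distinct vertices in cyclic order around the cycle, let 1 ≤ p < q ≤ m, and set i = v_p, j = v_q, I = {v_1,…,v_{p−1}}, J = {v_{p+1},…,v_{q−1}}, K = {v_{q+1},…,v_m} (any of which may be empty, with Y_∅ = 1). Then Y_{I∪{i}∪J} · Y_{J∪{j}∪K} = Y_J · Y_{I∪{i}∪J∪{j}∪K} + Y_I · Y_K. -/

import Mathlib

open MvPolynomial

/-- The ambient field: rational functions in the indeterminates `A_1,…,A_n,X_1,…,X_n`. -/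
abbrev Kn (n : ℕ) : Type := FractionRing (MvPolynomial (Fin n ⊕ Fin n) ℤ)

/-- The coefficient `A_i`, as an element of the ambient field. -/
noncomputable def AA {n : ℕ} (i : Fin n) : Kn n :=
  algebraMap (MvPolynomial (Fin n ⊕ Fin n) ℤ) (Kn n) (X (Sum.inl i))

/-- The initial cluster variable `X_i`, as an element of the ambient field. -/
noncomputable def XX {n : ℕ} (i : Fin n) : Kn n :=
  algebraMap (MvPolynomial (Fin n ⊕ Fin n) ℤ) (Kn n) (X (Sum.inr i))

/-- `f` is acyclic on `I`: the only directed cycles in the graph `{i → f(i) : i ∈ I}`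
are loops at fixed points. -/
def IsAcyclicOn {n : ℕ} (I : Finset (Fin n)) (f : Fin n → Fin n) : Prop :=
  ∀ i ∈ I, ∀ k : ℕ, 0 < k → (∀ r < k, f^[r] i ∈ I) → f^[k] i = i → f i = i

open Classical in
/-- The numerator `N_I` of `Y_I`: the generating function of acyclic functions `f : I → [n]`
(encoded as functions `Fin n → Fin n` fixing every vertex outside `I`), where a fixed point
`i ∈ I` contributes `A_i` and a non-fixed point contributes `X_{f i}`. -/
noncomputable def Ynum {n : ℕ} (E : Fin n → Fin n → Prop) (I : Finset (Fin n)) :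
    MvPolynomial (Fin n ⊕ Fin n) ℤ :=
  ∑ f : Fin n → Fin n,
    if (∀ i, i ∉ I → f i = i) ∧ (∀ i ∈ I, f i = i ∨ E i (f i)) ∧ IsAcyclicOn I f then
      ∏ i ∈ I, if f i = i then X (Sum.inl i) else X (Sum.inr (f i))
    else 0

/-- The Laurent polynomial `Y_I` (with `Y_∅ = 1`). -/
noncomputable def YY {n : ℕ} (E : Fin n → Fin n → Prop) (I : Finset (Fin n)) : Kn n :=
  algebraMap (MvPolynomial (Fin n ⊕ Fin n) ℤ) (Kn n) (Ynum E I) / ∏ i ∈ I, XX i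

open Classical in
/-- `P_S^{i,j}`: the sum of `Y_{S − p}` over all simple paths `p : i →_S j` in the graph,
whose intermediate vertices lie in `S`.  A path with `m` edges is encoded as an injective
map `v : Fin (m+1) → Fin n` whose consecutive values are edges. -/
noncomputable def PP {n : ℕ} (E : Fin n → Fin n → Prop) (S : Finset (Fin n)) (i j : Fin n) :
    Kn n :=
  ∑ m ∈ Finset.range (n + 1), ∑ v : Fin (m + 1) → Fin n,
    if Function.Injective v ∧ v 0 = i ∧ v (Fin.last m) = j ∧
        (∀ r : Fin m, E (v r.castSucc) (v r.succ)) ∧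
        (∀ r : Fin (m + 1), r ≠ 0 → r ≠ Fin.last m → v r ∈ S) then
      YY E (S \ Finset.image v Finset.univ)
    else 0

open Classical in
/-- The matrix `𝒴`, with diagonal entries `Y_{{i}}`, entries `−1` at edges of the graph,
and `0` elsewhere. -/
noncomputable def Ymat {n : ℕ} (E : Fin n → Fin n → Prop) : Matrix (Fin n) (Fin n) (Kn n) :=
  Matrix.of fun i j => if i = j then YY E {i} else if E i j then -1 else 0

/-- The doubly directed cycle `C_n` on `[n]`: edges `i → i ± 1 (mod n)`. -/
def cycE (n : ℕ) [NeZero n] : Fin n → Fin n → Prop :=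
  fun x y => y = x + 1 ∨ x = y + 1

/-!
Let `S` be an arc of the cycle, `w` its last vertex, `u` the vertex before `w` and `v ∉ S` the one
after. An acyclic map on `S` sends `w` to `w`, `v` or `u`. In the first two cases it restricts to an
arbitrary acyclic map on `S ∖ {w}`; in the third, to an acyclic map on `S ∖ {w}` that does not send
`u` back to `w`, since `u` is the only possible predecessor of `w` on a cycle. Counting these gives
`Y_S = Y_{w} Y_{S ∖ w} - Y_{S ∖ {w, u}}`, so `Y` of an arc is the continuant of the `Y_{v_r}` along
it. The theorem is then an identity between continuants, proved by induction on `|K|`: for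
`K = ∅` it is the constancy of the Casoratian of two solutions of the same three-term recurrence.
-/

open Function Finset

lemma iterate_update_of_forall_ne {α : Type*} [DecidableEq α] {f : α → α} {w t x : α} {k : ℕ}
    (h : ∀ r < k, f^[r] x ≠ w) : (update f w t)^[k] x = f^[k] x := by
  induction k with
  | zero => rfl
  | succ k ih =>
    rw [iterate_succ_apply', iterate_succ_apply', ih fun r hr => h r (by omega),
      update_of_ne (h k (by omega))]

section Acyclic

variable {n : ℕ} {I : Finset (Fin n)} {f : Fin n → Fin n} {w : Fin n}

def IsAcyclicAt (I : Finset (Fin n)) (f : Fin n → Fin n) (i : Fin n) : Prop :=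
  ∀ k : ℕ, 0 < k → (∀ r < k, f^[r] i ∈ I) → f^[k] i = i → f i = i

lemma isAcyclicAt_of_apply_eq_self {i : Fin n} (h : f i = i) : IsAcyclicAt I f i :=
  fun _ _ _ _ => h

lemma isAcyclicAt_of_apply_notMem {i : Fin n} (h : f i ∉ I) : IsAcyclicAt I f i := by
  intro k hk hmem hcyc
  rcases Nat.lt_or_ge 1 k with hk1 | hk1
  · exact absurd (hmem 1 hk1) h
  · obtain rfl : k = 1 := by omega
    exact hcyc

lemma IsAcyclicOn.erase_update (hf : IsAcyclicOn I f) (w : Fin n) :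
    IsAcyclicOn (I.erase w) (update f w w) := by
  intro i hi k hk hmem hcyc
  have horbit : ∀ r ≤ k, f^[r] i = (update f w w)^[r] i := fun r hr => by
    have hf' : f = update (update f w w) w (f w) := by simp
    conv_lhs => rw [hf']
    exact iterate_update_of_forall_ne fun s hs => (mem_erase.mp (hmem s (by omega))).1
  have hi' : i ≠ w := (mem_erase.mp hi).1
  rw [update_of_ne hi']
  refine hf i (mem_of_mem_erase hi) k hk (fun r hr => ?_) (by rw [horbit k le_rfl, hcyc])
  rw [horbit r hr.le]
  exact mem_of_mem_erase (hmem r hr)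

lemma IsAcyclicOn.of_erase_update (hg : IsAcyclicOn (I.erase w) (update f w w))
    (hw : IsAcyclicAt I f w) : IsAcyclicOn I f := by
  intro i hi k hk hmem hcyc
  by_cases hhit : ∃ r < k, f^[r] i = w
  · obtain ⟨r, hr, rfl⟩ := hhit
    have hper : IsPeriodicPt f k i := hcyc
    have hfix : f (f^[r] i) = f^[r] i := hw k hk
      (fun s hs => by
        rw [← iterate_add_apply, ← hper.iterate_mod_apply]
        exact hmem _ (Nat.mod_lt _ hk))
      (hper.apply_iterate r)
    have hri : f^[r] i = i := calc
      f^[r] i = f^[k - r] (f^[r] i) := (iterate_fixed hfix _).symm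
      _ = i := by rw [← iterate_add_apply, Nat.sub_add_cancel hr.le, hcyc]
    rwa [hri] at hfix
  · push Not at hhit
    have horbit : ∀ r ≤ k, (update f w w)^[r] i = f^[r] i := fun r hr =>
      iterate_update_of_forall_ne fun s hs => hhit s (by omega)
    have hi' : i ≠ w := by simpa using hhit 0 hk
    have := hg i (mem_erase.mpr ⟨hi', hi⟩) k hk
      (fun r hr => by rw [horbit r hr.le]; exact mem_erase.mpr ⟨hhit r hr, hmem r hr⟩)
      (by rw [horbit k le_rfl, hcyc])
    rwa [update_of_ne hi'] at this

end Acyclic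

section Admissible

variable {n : ℕ} {E : Fin n → Fin n → Prop} {I : Finset (Fin n)} {f g : Fin n → Fin n}
  {w t u v : Fin n}

structure IsAdmissible (E : Fin n → Fin n → Prop) (I : Finset (Fin n)) (f : Fin n → Fin n) :
    Prop where
  apply_of_notMem : ∀ i, i ∉ I → f i = i
  edge : ∀ i ∈ I, f i = i ∨ E i (f i)
  acyclic : IsAcyclicOn I f

noncomputable def arrowWeight (i j : Fin n) : MvPolynomial (Fin n ⊕ Fin n) ℤ :=
  if j = i then X (Sum.inl i) else X (Sum.inr j)

noncomputable def weight (I : Finset (Fin n)) (f : Fin n → Fin n) :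
    MvPolynomial (Fin n ⊕ Fin n) ℤ :=
  ∏ i ∈ I, arrowWeight i (f i)

open Classical in
lemma Ynum_eq_sum : Ynum E I = ∑ f with IsAdmissible E I f, weight I f := by
  rw [Ynum, sum_filter]
  exact sum_congr rfl fun f _ =>
    if_congr ⟨fun ⟨h₁, h₂, h₃⟩ => ⟨h₁, h₂, h₃⟩, fun h => ⟨h.1, h.2, h.3⟩⟩ rfl rfl

lemma isAdmissible_iff_erase_update (hw : w ∈ I) :
    IsAdmissible E I f ↔ IsAdmissible E (I.erase w) (update f w w) ∧
      (f w = w ∨ E w (f w)) ∧ IsAcyclicAt I f w := by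
  constructor
  · intro hf
    refine ⟨⟨fun i hi => ?_, fun i hi => ?_, hf.acyclic.erase_update w⟩,
      hf.edge w hw, hf.acyclic w hw⟩
    · rcases eq_or_ne i w with rfl | hiw
      · exact update_self i i f
      · rw [update_of_ne hiw]
        exact hf.apply_of_notMem i fun hiI => hi (mem_erase.mpr ⟨hiw, hiI⟩)
    · rw [update_of_ne (ne_of_mem_erase hi)]
      exact hf.edge i (mem_of_mem_erase hi)
  · rintro ⟨hg, hedge, hcyc⟩
    refine ⟨fun i hi => ?_, fun i hi => ?_, hg.acyclic.of_erase_update hcyc⟩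
    · have hiw : i ≠ w := ne_of_mem_of_not_mem hw hi |>.symm
      rw [← update_of_ne hiw w f]
      exact hg.apply_of_notMem i fun h => hi (mem_of_mem_erase h)
    · rcases eq_or_ne i w with rfl | hiw
      · exact hedge
      · rw [← update_of_ne hiw w f]
        exact hg.edge i (mem_erase.mpr ⟨hiw, hi⟩)

lemma weight_eq_mul_erase_update (hw : w ∈ I) :
    weight I f = arrowWeight w (f w) * weight (I.erase w) (update f w w) := by
  rw [weight, weight, ← mul_prod_erase I _ hw]
  congr 1
  exact prod_congr rfl fun i hi => by rw [update_of_ne (ne_of_mem_erase hi)]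

open Classical in
lemma sum_admissible_apply_eq (hw : w ∈ I) (ht : t = w ∨ E w t) :
    ∑ f with IsAdmissible E I f ∧ f w = t, weight I f =
      arrowWeight w t * ∑ g with IsAdmissible E (I.erase w) g ∧ IsAcyclicAt I (update g w t) w,
        weight (I.erase w) g := by
  have hback : ∀ g, IsAdmissible E (I.erase w) g → update (update g w t) w w = g := fun g hg => by
    rw [update_idem, update_eq_self_iff]
    exact (hg.apply_of_notMem w (notMem_erase w I)).symm
  rw [mul_sum]
  refine sum_nbij' (fun f => update f w w) (fun g => update g w t) ?_ ?_ ?_ ?_ ?_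
  · simp only [mem_filter, mem_univ, true_and]
    rintro f ⟨hf, rfl⟩
    have hfw : update (update f w w) w (f w) = f := by simp
    rw [hfw]
    exact ⟨((isAdmissible_iff_erase_update hw).mp hf).1, hf.acyclic w hw⟩
  · simp only [mem_filter, mem_univ, true_and]
    rintro g ⟨hg, hcyc⟩
    refine ⟨(isAdmissible_iff_erase_update hw).mpr ⟨?_, by simpa using ht, hcyc⟩, update_self ..⟩
    rwa [hback g hg]
  · intro f hf
    rw [← (mem_filter.mp hf).2.2]
    simp
  · intro g hg
    exact hback g (mem_filter.mp hg).2.1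
  · simp only [mem_filter, mem_univ, true_and, and_imp]
    rintro f - rfl
    exact weight_eq_mul_erase_update hw

open Classical in
lemma sum_admissible_apply_eq_of_eq_or_notMem (hw : w ∈ I) (ht : t = w ∨ (t ∉ I ∧ E w t)) :
    ∑ f with IsAdmissible E I f ∧ f w = t, weight I f = arrowWeight w t * Ynum E (I.erase w) := by
  have hcyc : ∀ g : Fin n → Fin n, IsAcyclicAt I (update g w t) w := fun g => by
    rcases ht with rfl | ⟨htI, -⟩
    · exact isAcyclicAt_of_apply_eq_self (update_self ..)
    · exact isAcyclicAt_of_apply_notMem (by rwa [update_self])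
  rw [sum_admissible_apply_eq hw (ht.imp_right And.right), Ynum_eq_sum]
  simp only [hcyc, and_true]

lemma isAcyclicAt_update_iff (hw : w ∈ I) (hu : u ∈ I) (huw : u ≠ w)
    (hin : ∀ i ∈ I, i ≠ w → E i w → i = u) (hg : IsAdmissible E (I.erase w) g) :
    IsAcyclicAt I (update g w u) w ↔ g u ≠ w := by
  set f := update g w u
  have hfw : f w = u := update_self ..
  have hfu : f u = g u := update_of_ne huw ..
  constructor
  · intro hcyc hgu
    refine huw (hfw ▸ hcyc 2 two_pos (fun r hr => ?_) ?_)
    · interval_cases r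
      · exact hw
      · simpa [hfw] using hu
    · simp [hfw, hfu, hgu]
  · intro hgu k hk hmem hcyc
    set x := f^[k - 1] w
    have hfx : f x = w := by
      rw [← iterate_succ_apply' f, ← hcyc]
      congr 1
      omega
    rcases eq_or_ne x w with hxw | hxw
    · rwa [hxw] at hfx
    have hgx : g x = w := by rwa [← update_of_ne hxw u g]
    have hxI : x ∈ I.erase w := mem_erase.mpr ⟨hxw, hmem _ (by omega)⟩
    have hxu : x = u := by
      refine hin x (mem_of_mem_erase hxI) hxw ?_
      rcases hg.edge x hxI with h | h
      · exact absurd (hgx.symm.trans h) hxw.symm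
      · rwa [hgx] at h
    exact absurd (hxu ▸ hgx) hgu

open Classical in
lemma Ynum_eq_sum_fibers (T : Finset (Fin n)) (hw : w ∈ I) (hwT : w ∈ T)
    (hT : ∀ t, E w t → t ∈ T) :
    Ynum E I = ∑ t ∈ T, ∑ f with IsAdmissible E I f ∧ f w = t, weight I f := by
  rw [Ynum_eq_sum, ← sum_fiberwise_of_maps_to (g := fun f => f w) (t := T)]
  · simp only [filter_filter]
  · intro f hf
    rcases (mem_filter.mp hf).2.edge w hw with h | h
    · rwa [h]
    · exact hT _ h

lemma Ynum_empty : Ynum E (∅ : Finset (Fin n)) = 1 := by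
  classical
  rw [Ynum_eq_sum, sum_eq_single_of_mem id]
  · exact prod_empty
  · simp only [mem_filter, mem_univ, true_and]
    exact ⟨fun _ _ => rfl, by simp, by simp [IsAcyclicOn]⟩
  · intro f hf hfid
    exact absurd (funext fun i => (mem_filter.mp hf).2.apply_of_notMem i (notMem_empty i)) hfid

lemma Ynum_singleton (hvw : v ≠ w) (huw : u ≠ w) (hvu : v ≠ u) (hEv : E w v) (hEu : E w u)
    (hout : ∀ t, E w t → t = v ∨ t = u) :
    Ynum E {w} = X (Sum.inl w) + X (Sum.inr v) + X (Sum.inr u) := by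
  classical
  have hw : w ∈ ({w} : Finset (Fin n)) := mem_singleton_self w
  rw [Ynum_eq_sum_fibers {w, v, u} hw (by simp) fun t ht => by simpa using .inr (hout t ht),
    sum_insert (by simp [hvw.symm, huw.symm]), sum_pair hvu,
    sum_admissible_apply_eq_of_eq_or_notMem hw (.inl rfl),
    sum_admissible_apply_eq_of_eq_or_notMem hw (.inr ⟨by simpa using hvw, hEv⟩),
    sum_admissible_apply_eq_of_eq_or_notMem hw (.inr ⟨by simpa using huw, hEu⟩),
    erase_singleton, Ynum_empty]
  simp [arrowWeight, hvw, huw, add_assoc]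

open Classical in
lemma Ynum_erase_recurrence (hw : w ∈ I) (hu : u ∈ I) (huw : u ≠ w) (hv : v ∉ I) (hvu : v ≠ u)
    (hEv : E w v) (hEu : E w u) (hEuw : E u w) (hout : ∀ t, E w t → t = v ∨ t = u)
    (hin : ∀ i ∈ I, i ≠ w → E i w → i = u) :
    Ynum E I = (X (Sum.inl w) + X (Sum.inr v) + X (Sum.inr u)) * Ynum E (I.erase w) -
      X (Sum.inr u) * X (Sum.inr w) * Ynum E ((I.erase w).erase u) := by
  have hvw : v ≠ w := ne_of_mem_of_not_mem hw hv |>.symm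
  have hu' : u ∈ I.erase w := mem_erase.mpr ⟨huw, hu⟩
  have hfiber_u : ∑ f with IsAdmissible E I f ∧ f w = u, weight I f =
      X (Sum.inr u) * (Ynum E (I.erase w) - X (Sum.inr w) * Ynum E ((I.erase w).erase u)) := by
    have hcyc : ∀ g, IsAdmissible E (I.erase w) g →
        (IsAcyclicAt I (update g w u) w ↔ ¬ g u = w) :=
      fun g hg => isAcyclicAt_update_iff hw hu huw hin hg
    have hcomp : ∑ g with IsAdmissible E (I.erase w) g ∧ ¬ g u = w, weight (I.erase w) g =
        Ynum E (I.erase w) - ∑ g with IsAdmissible E (I.erase w) g ∧ g u = w,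
          weight (I.erase w) g := by
      rw [Ynum_eq_sum, eq_sub_iff_add_eq, ← filter_filter, ← filter_filter, add_comm,
        sum_filter_add_sum_filter_not]
    rw [sum_admissible_apply_eq hw (.inr hEu), filter_congr fun g _ => and_congr_right (hcyc g),
      hcomp, sum_admissible_apply_eq_of_eq_or_notMem hu' (.inr ⟨notMem_erase w I, hEuw⟩)]
    simp [arrowWeight, huw, huw.symm]
  rw [Ynum_eq_sum_fibers {w, v, u} hw (by simp) fun t ht => by simpa using .inr (hout t ht),
    sum_insert (by simp [hvw.symm, huw.symm]), sum_pair hvu,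
    sum_admissible_apply_eq_of_eq_or_notMem hw (.inl rfl),
    sum_admissible_apply_eq_of_eq_or_notMem hw (.inr ⟨hv, hEv⟩), hfiber_u]
  simp only [arrowWeight, if_pos, if_neg hvw]
  ring

lemma XX_ne_zero (i : Fin n) : XX i ≠ 0 :=
  IsFractionRing.to_map_eq_zero_iff.not.mpr (X_ne_zero _)

lemma YY_empty : YY E (∅ : Finset (Fin n)) = 1 := by
  simp [YY, Ynum_empty]

lemma YY_erase_recurrence (hw : w ∈ I) (hu : u ∈ I) (huw : u ≠ w) (hv : v ∉ I) (hvu : v ≠ u)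
    (hEv : E w v) (hEu : E w u) (hEuw : E u w) (hout : ∀ t, E w t → t = v ∨ t = u)
    (hin : ∀ i ∈ I, i ≠ w → E i w → i = u) :
    YY E I = YY E {w} * YY E (I.erase w) - YY E ((I.erase w).erase u) := by
  have hvw : v ≠ w := ne_of_mem_of_not_mem hw hv |>.symm
  have hprod : ∏ i ∈ I, XX i = XX w * ∏ i ∈ I.erase w, XX i := (mul_prod_erase I _ hw).symm
  have hprod' : ∏ i ∈ I.erase w, XX i = XX u * ∏ i ∈ (I.erase w).erase u, XX i :=
    (mul_prod_erase _ _ (mem_erase.mpr ⟨huw, hu⟩)).symm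
  have hP := prod_ne_zero_iff.mpr fun i (_ : i ∈ (I.erase w).erase u) => XX_ne_zero i
  rw [YY, YY, YY, YY, Ynum_erase_recurrence hw hu huw hv hvu hEv hEu hEuw hout hin,
    Ynum_singleton hvw huw hvu hEv hEu hout, prod_singleton, hprod, hprod']
  have hXw := XX_ne_zero w
  have hXu := XX_ne_zero u
  simp only [map_sub, map_mul, map_add]
  field_simp
  simp only [XX]
  ring

end Admissible

section Continuant

variable {R : Type*} [CommRing R]

def continuant (y : ℕ → R) (a : ℕ) : ℕ → R
  | 0 => 1
  | 1 => y a
  | l + 2 => y (a + l + 1) * continuant y a (l + 1) - continuant y a l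

lemma continuant_add_two_of_eq {y : ℕ → R} {a l b : ℕ} (h : a + l + 1 = b) :
    continuant y a (l + 2) = y b * continuant y a (l + 1) - continuant y a l := by
  subst h; rfl

lemma casoratian_eq {c f g : ℕ → R} (hf : ∀ l, f (l + 2) = c l * f (l + 1) - f l)
    (hg : ∀ l, g (l + 2) = c l * g (l + 1) - g l) (l : ℕ) :
    f l * g (l + 1) - g l * f (l + 1) = f 0 * g 1 - g 0 * f 1 := by
  induction l with
  | zero => rfl
  | succ l ih => linear_combination f (l + 1) * hg l - g (l + 1) * hf l + ih

/-- With `I`, `J`, `K` of lengths `x`, `l`, `z` starting at `a`, `a + x + 1`, `a + x + l + 2`: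
`Y_{I i J} Y_{J j K} = Y_J Y_{I i J j K} + Y_I Y_K`. -/
theorem continuant_mul_continuant (y : ℕ → R) (a x l z : ℕ) :
    continuant y a (x + 1 + l) * continuant y (a + x + 1) (l + 1 + z) =
      continuant y (a + x + 1) l * continuant y a (x + 1 + (l + 1) + z) +
        continuant y a x * continuant y (a + x + l + 2) z := by
  have hW := casoratian_eq (c := fun l => y (a + x + l + 2))
    (f := fun l => continuant y a (x + 1 + l)) (g := continuant y (a + x + 1))
    (fun l => continuant_add_two_of_eq (a := a) (l := x + 1 + l) (by omega))
    (fun l => continuant_add_two_of_eq (by omega)) l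
  simp only [continuant, add_zero] at hW
  induction z using Nat.twoStepInduction with
  | zero =>
    simp only [continuant]
    linear_combination hW
  | one =>
    have h1 := continuant_add_two_of_eq (y := y) (a := a + x + 1) (l := l) (b := a + x + l + 2)
      (by omega)
    have h2 := continuant_add_two_of_eq (y := y) (a := a) (l := x + 1 + l) (b := a + x + l + 2)
      (by omega)
    simp only [continuant] at h1 h2 ⊢
    linear_combination (y (a + x + l + 2)) * hW + continuant y a (x + 1 + l) * h1
      - continuant y (a + x + 1) l * h2
  | more z ih₀ ih₁ =>
    have h1 := continuant_add_two_of_eq (y := y) (a := a + x + 1) (l := l + 1 + z)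
      (b := a + x + l + z + 3) (by omega)
    have h2 := continuant_add_two_of_eq (y := y) (a := a) (l := x + 1 + (l + 1) + z)
      (b := a + x + l + z + 3) (by omega)
    have h3 := continuant_add_two_of_eq (y := y) (a := a + x + l + 2) (l := z)
      (b := a + x + l + z + 3) (by omega)
    linear_combination (y (a + x + l + z + 3)) * ih₁ - ih₀ + continuant y a (x + 1 + l) * h1
      - continuant y (a + x + 1) l * h2 - continuant y a x * h3

end Continuant

section Cycle

open Fin.NatCast

variable {n : ℕ} [NeZero n]

lemma cycE_comm {x y : Fin n} : cycE n x y ↔ cycE n y x :=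
  or_comm

lemma cycE_add_one_iff {u t : Fin n} : cycE n (u + 1) t ↔ t = u + 1 + 1 ∨ t = u := by
  simp only [cycE, add_left_inj, eq_comm (a := u)]

lemma add_natCast_notMem_image_Ico (c : Fin n) {a b : ℕ} (hb : b < a + n) :
    c + (b : Fin n) ∉ (Ico a b).image fun r : ℕ => c + (r : Fin n) := by
  simp only [mem_image, mem_Ico, add_right_inj, not_exists, not_and]
  intro r ⟨har, hrb⟩ hrb'
  have hmod : b % n = r % n := by simpa [Fin.ext_iff, Fin.val_natCast] using hrb'.symm
  have h := Nat.sub_mod_eq_zero_of_mod_eq hmod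
  rw [Nat.mod_eq_of_lt (by omega)] at h
  omega

lemma YY_cycE_image_Ico_add (c : Fin n) (a l : ℕ) (hl : l < n) :
    YY (cycE n) ((Ico a (a + l)).image fun r : ℕ => c + (r : Fin n)) =
      continuant (fun r => YY (cycE n) {c + (r : Fin n)}) a l := by
  induction l using Nat.twoStepInduction with
  | zero => simp [YY_empty, continuant]
  | one => simp [continuant]
  | more l ih₀ ih₁ =>
    set φ : ℕ → Fin n := fun r => c + (r : Fin n)
    have hφ : ∀ r, φ (r + 1) = φ r + 1 := fun r => by simp only [φ, Nat.cast_succ, add_assoc]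
    have hS₁ : (Ico a (a + (l + 1))).image φ = insert (φ (a + l)) ((Ico a (a + l)).image φ) := by
      rw [← add_assoc, Nat.Ico_succ_right_eq_insert_Ico (by omega), image_insert]
    have hS₂ : (Ico a (a + (l + 2))).image φ =
        insert (φ (a + l) + 1) ((Ico a (a + (l + 1))).image φ) := by
      rw [← add_assoc, Nat.Ico_succ_right_eq_insert_Ico (by omega), image_insert, hφ]
      rfl
    have hw₁ : φ (a + l) + 1 ∉ (Ico a (a + (l + 1))).image φ := by
      rw [← hφ]; exact add_natCast_notMem_image_Ico c (by omega)
    have hu₀ : φ (a + l) ∉ (Ico a (a + l)).image φ := add_natCast_notMem_image_Ico c (by omega)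
    have hv : φ (a + l) + 1 + 1 ∉ (Ico a (a + (l + 2))).image φ := by
      rw [← hφ, ← hφ]; exact add_natCast_notMem_image_Ico c (by omega)
    have hu : φ (a + l) ∈ (Ico a (a + (l + 2))).image φ := by
      rw [hS₂, hS₁]; simp
    have huw : φ (a + l) ≠ φ (a + l) + 1 := fun h => hw₁ (h ▸ by rw [hS₁]; simp)
    have hrec := YY_erase_recurrence (E := cycE n) (by rw [hS₂]; simp) hu huw hv
      (fun h => hv (by rwa [h])) (cycE_add_one_iff.mpr (.inl rfl)) (cycE_add_one_iff.mpr (.inr rfl))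
      (cycE_comm.mp (cycE_add_one_iff.mpr (.inr rfl))) (fun _ => cycE_add_one_iff.mp)
      (fun i hi _ h => (cycE_add_one_iff.mp (cycE_comm.mp h)).resolve_left fun h' => hv (h' ▸ hi))
    rw [hrec, hS₂, erase_insert hw₁, hS₁, erase_insert hu₀, ← hS₁, ih₀ (by omega),
      ih₁ (by omega), ← hφ]
    rfl

lemma YY_cycE_image_Ico (c : Fin n) {a b : ℕ} (hab : a ≤ b) (hb : b < a + n) :
    YY (cycE n) ((Ico a b).image fun r : ℕ => c + (r : Fin n)) =
      continuant (fun r => YY (cycE n) {c + (r : Fin n)}) a (b - a) := by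
  obtain ⟨l, rfl⟩ := Nat.exists_eq_add_of_le hab
  rw [Nat.add_sub_cancel_left]
  exact YY_cycE_image_Ico_add c a l (by omega)

end Cycle

open Fin.NatCast in
theorem stmt16_general (n : ℕ) [NeZero n] (c : Fin n) (m p q : ℕ)
    (hmn : m < n) (hp : 1 ≤ p) (hpq : p < q) (hq : q ≤ m) :
    YY (cycE n) ((Finset.Ico 1 q).image fun r : ℕ => c + (r : Fin n)) *
        YY (cycE n) ((Finset.Ioc p m).image fun r : ℕ => c + (r : Fin n)) =
      YY (cycE n) ((Finset.Ioo p q).image fun r : ℕ => c + (r : Fin n)) *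
          YY (cycE n) ((Finset.Icc 1 m).image fun r : ℕ => c + (r : Fin n)) +
        YY (cycE n) ((Finset.Ico 1 p).image fun r : ℕ => c + (r : Fin n)) *
          YY (cycE n) ((Finset.Ioc q m).image fun r : ℕ => c + (r : Fin n)) := by
  rw [← Ico_add_one_add_one_eq_Ioc, ← Ico_add_one_add_one_eq_Ioc, ← Ico_add_one_left_eq_Ioo,
    ← Ico_add_one_right_eq_Icc, YY_cycE_image_Ico c (a := 1) (b := q) (by omega) (by omega),
    YY_cycE_image_Ico c (a := p + 1) (b := m + 1) (by omega) (by omega),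
    YY_cycE_image_Ico c (a := p + 1) (b := q) (by omega) (by omega),
    YY_cycE_image_Ico c (a := 1) (b := m + 1) (by omega) (by omega),
    YY_cycE_image_Ico c (a := 1) (b := p) (by omega) (by omega),
    YY_cycE_image_Ico c (a := q + 1) (b := m + 1) (by omega) (by omega)]
  convert continuant_mul_continuant _ 1 (p - 1) (q - p - 1) (m - q) using 4 <;> omega

open Fin.NatCast in
/-- For the cycle `C_n` (`n ≥ 3`) and consecutive vertices `v_1,…,v_m` (`m < n`) in cyclic
order starting after `c`, with `1 ≤ p < q ≤ m`, `i = v_p`, `j = v_q`,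
`I = {v_1,…,v_{p−1}}`, `J = {v_{p+1},…,v_{q−1}}`, `K = {v_{q+1},…,v_m}`:
`Y_{I∪{i}∪J} · Y_{J∪{j}∪K} = Y_J · Y_{I∪{i}∪J∪{j}∪K} + Y_I · Y_K`. -/
theorem stmt16 (n : ℕ) [NeZero n] (hn : 3 ≤ n) (c : Fin n) (m p q : ℕ)
    (hmn : m < n) (hp : 1 ≤ p) (hpq : p < q) (hq : q ≤ m) :
    YY (cycE n) ((Finset.Ico 1 q).image fun r : ℕ => c + (r : Fin n)) *
        YY (cycE n) ((Finset.Ioc p m).image fun r : ℕ => c + (r : Fin n)) =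
      YY (cycE n) ((Finset.Ioo p q).image fun r : ℕ => c + (r : Fin n)) *
          YY (cycE n) ((Finset.Icc 1 m).image fun r : ℕ => c + (r : Fin n)) +
        YY (cycE n) ((Finset.Ico 1 p).image fun r : ℕ => c + (r : Fin n)) *
          YY (cycE n) ((Finset.Ioc q m).image fun r : ℕ => c + (r : Fin n)) :=
  stmt16_general n c m p q hmn hp hpq hq
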